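/- arXiv:1702.05003 — 2 statements merged into one kernel-verified Lean document; each statement's English description precedes it below -/
import Mathlib

section
/- For every complex number z = x + iy with real part x ≤ 0, one has |e^z - 1| ≤ √2 |z|. -/
/-! On the closed left half-plane `‖(exp)' z‖ = exp (re z) ≤ 1`, and the half-plane is convex, so
by the mean value inequality `exp` is `1`-Lipschitz there; compare `z` with `0`. -/

open Complex

theorem Complex.norm_exp_le_one_of_re_nonpos {z : ℂ} (hz : z.re ≤ 0) : ‖exp z‖ ≤ 1 :=
  (norm_exp z).trans_le (Real.exp_le_one_iff.mpr hz)

theorem Complex.norm_exp_sub_exp_le_of_re_nonpos {z w : ℂ} (hz : z.re ≤ 0) (hw : w.re ≤ 0) :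
    ‖exp z - exp w‖ ≤ ‖z - w‖ := by
  simpa only [one_mul] using
    (convex_halfSpace_re_le (0 : ℝ)).norm_image_sub_le_of_norm_deriv_le (C := 1)
      (fun _ _ => differentiableAt_exp)
      (fun u hu => by simpa only [Complex.deriv_exp] using norm_exp_le_one_of_re_nonpos hu)
      hw hz

theorem Complex.norm_exp_sub_one_le_of_re_nonpos {z : ℂ} (hz : z.re ≤ 0) :
    ‖exp z - 1‖ ≤ ‖z‖ := by
  simpa only [exp_zero, sub_zero] using
    norm_exp_sub_exp_le_of_re_nonpos hz zero_re.le

theorem abs_cexp_sub_one_le_of_re_nonpos (z : ℂ) (hz : z.re ≤ 0) :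
    ‖Complex.exp z - 1‖ ≤ Real.sqrt 2 * ‖z‖ :=
  calc ‖Complex.exp z - 1‖ ≤ ‖z‖ := norm_exp_sub_one_le_of_re_nonpos hz
    _ ≤ Real.sqrt 2 * ‖z‖ :=
      le_mul_of_one_le_left (norm_nonneg z) (Real.one_le_sqrt.mpr one_le_two)
end

section
/- Let N be a Poisson random variable with parameter λ > 0, independent of an i.i.d. sequence (X_i) of real random variables with E[|X_1|^p] < ∞ for some 0 < p ≤ 2. Then Y = ∑_{i=1}^N X_i satisfies E[|Y|^p] ≤ E[N^2] · E[|X_1|^p] < ∞. -/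
/-!
For `0 < p ≤ 2` one has `|x₁ + ⋯ + xₙ| ^ p ≤ n * ∑ |xᵢ| ^ p`: for `p ≤ 1` by subadditivity of
`t ↦ t ^ p`, and for `1 ≤ p ≤ 2` by the power mean inequality, since `n ^ (p - 1) ≤ n`.
Applied with `n = N`, independence of `N` and the `Xᵢ` lets one integrate over the `Xᵢ` first,
which turns the right-hand side into `E[N²] E[|X₀| ^ p]`; Poisson variables have finite moments.
-/

open MeasureTheory ProbabilityTheory Finset
open scoped ENNReal NNReal

namespace ENNReal

variable {ι : Type*} (s : Finset ι) (f : ι → ℝ≥0∞) {p : ℝ}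

theorem rpow_sum_le_sum_rpow (hp : 0 < p) (hp1 : p ≤ 1) :
    (∑ i ∈ s, f i) ^ p ≤ ∑ i ∈ s, f i ^ p := by
  classical
  induction s using Finset.induction_on with
  | empty => simp [ENNReal.zero_rpow_of_pos hp]
  | insert a s ha ih =>
    rw [sum_insert ha, sum_insert ha]
    exact (rpow_add_le_add_rpow _ _ hp.le hp1).trans (add_le_add_right ih _)

theorem rpow_sum_le_card_mul_sum_rpow (hp : 0 < p) (hp2 : p ≤ 2) :
    (∑ i ∈ s, f i) ^ p ≤ #s * ∑ i ∈ s, f i ^ p := by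
  rcases s.eq_empty_or_nonempty with rfl | hs
  · simp [ENNReal.zero_rpow_of_pos hp]
  have hcard : (1 : ℝ≥0∞) ≤ #s := by exact_mod_cast hs.card_pos
  rcases le_total p 1 with hp1 | hp1
  · exact (rpow_sum_le_sum_rpow s f hp hp1).trans (le_mul_of_one_le_left zero_le hcard)
  · calc (∑ i ∈ s, f i) ^ p ≤ (#s : ℝ≥0∞) ^ (p - 1) * ∑ i ∈ s, f i ^ p :=
          rpow_sum_le_const_mul_sum_rpow s f hp1
      _ ≤ (#s : ℝ≥0∞) ^ (1 : ℝ) * ∑ i ∈ s, f i ^ p :=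
          mul_le_mul_left (rpow_le_rpow_of_exponent_le hcard (by linarith)) _
      _ = #s * ∑ i ∈ s, f i ^ p := by rw [rpow_one]

theorem ofReal_abs_sum_rpow_le (a : ι → ℝ) (hp : 0 < p) (hp2 : p ≤ 2) :
    ENNReal.ofReal (|∑ i ∈ s, a i| ^ p) ≤ #s * ∑ i ∈ s, ENNReal.ofReal (|a i| ^ p) := by
  simp_rw [← ENNReal.ofReal_rpow_of_nonneg (abs_nonneg _) hp.le]
  calc ENNReal.ofReal |∑ i ∈ s, a i| ^ p ≤ (∑ i ∈ s, ENNReal.ofReal |a i|) ^ p := by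
        rw [← ENNReal.ofReal_sum_of_nonneg fun i _ => abs_nonneg (a i)]
        gcongr
        exact abs_sum_le_sum_abs a s
    _ ≤ _ := rpow_sum_le_card_mul_sum_rpow s _ hp hp2

end ENNReal

theorem ProbabilityTheory.IndepFun.lintegral_comp_eq_lintegral_lintegral
    {Ω α β : Type*} [MeasurableSpace Ω] [MeasurableSpace α] [MeasurableSpace β]
    {μ : Measure Ω} [IsFiniteMeasure μ] {f : Ω → α} {g : Ω → β} (hfg : IndepFun f g μ)
    (hf : Measurable f) (hg : Measurable g) {F : α → β → ℝ≥0∞}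
    (hF : Measurable (Function.uncurry F)) :
    ∫⁻ ω, F (f ω) (g ω) ∂μ = ∫⁻ ω, ∫⁻ ω', F (f ω) (g ω') ∂μ ∂μ := by
  calc ∫⁻ ω, F (f ω) (g ω) ∂μ
        = ∫⁻ z, Function.uncurry F z ∂μ.map (fun ω => (f ω, g ω)) :=
        (lintegral_map hF (hf.prodMk hg)).symm
    _ = ∫⁻ a, ∫⁻ b, F a b ∂μ.map g ∂μ.map f := by
        rw [(indepFun_iff_map_prod_eq_prod_map_map hf.aemeasurable hg.aemeasurable).1 hfg,
          lintegral_prod _ hF.aemeasurable]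
        rfl
    _ = ∫⁻ ω, ∫⁻ ω', F (f ω) (g ω') ∂μ ∂μ :=
        (lintegral_map hF.lintegral_prod_right' hf).trans
          (lintegral_congr fun ω => lintegral_map hF.of_uncurry_left hg)

theorem ProbabilityTheory.lintegral_natCast_mul_sum_range_eq_of_indepFun
    {Ω β : Type*} [MeasurableSpace Ω] [MeasurableSpace β] {μ : Measure Ω} [IsFiniteMeasure μ]
    {N : Ω → ℕ} {X : ℕ → Ω → β} (hN : Measurable N) (hX : ∀ i, Measurable (X i))
    (hNX : IndepFun N (fun ω i => X i ω) μ) (hident : ∀ i, IdentDistrib (X i) (X 0) μ μ)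
    {g : β → ℝ≥0∞} (hg : Measurable g) :
    ∫⁻ ω, N ω * ∑ i ∈ range (N ω), g (X i ω) ∂μ =
      (∫⁻ ω, (N ω : ℝ≥0∞) ^ 2 ∂μ) * ∫⁻ ω, g (X 0 ω) ∂μ := by
  have hF : Measurable (Function.uncurry fun (n : ℕ) (x : ℕ → β) =>
      (n : ℝ≥0∞) * ∑ i ∈ range n, g (x i)) :=
    measurable_from_prod_countable_right fun n =>
      show Measurable fun x : ℕ → β => (n : ℝ≥0∞) * ∑ i ∈ range n, g (x i) from
      (Finset.measurable_fun_sum _ fun i _ => hg.comp (measurable_pi_apply i)).const_mul _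
  rw [hNX.lintegral_comp_eq_lintegral_lintegral hN (measurable_pi_lambda _ hX) hF,
    ← lintegral_mul_const _ (by fun_prop)]
  refine lintegral_congr fun ω => ?_
  rw [lintegral_const_mul _ (by fun_prop), lintegral_finsetSum _ fun i _ => by fun_prop]
  have hmean (i : ℕ) : ∫⁻ ω, g (X i ω) ∂μ = ∫⁻ ω, g (X 0 ω) ∂μ :=
    ((hident i).comp hg).lintegral_eq
  simp only [hmean, sum_const, card_range, nsmul_eq_mul]
  ring

theorem Real.summable_sq_mul_pow_div_factorial (x : ℝ) :
    Summable fun n : ℕ => (n : ℝ) ^ 2 * x ^ n / n.factorial := by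
  refine .of_norm_bounded (Real.summable_pow_div_factorial (4 * |x|)) fun n => ?_
  have hsq : (n : ℝ) ^ 2 ≤ 4 ^ n := by
    have : n ^ 2 ≤ 4 ^ n := calc
      n ^ 2 ≤ (2 ^ n) ^ 2 := Nat.pow_le_pow_left Nat.lt_two_pow_self.le 2
      _ = 4 ^ n := by rw [← pow_mul, mul_comm, pow_mul]; norm_num
    exact_mod_cast this
  rw [Real.norm_eq_abs, abs_div, abs_mul, abs_pow, abs_pow, Nat.abs_cast, Nat.abs_cast, mul_pow]
  gcongr

theorem ProbabilityTheory.integrable_sq_poissonMeasure (r : ℝ≥0) :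
    Integrable (fun n : ℕ => (n : ℝ) ^ 2) (poissonMeasure r) := by
  refine integrable_poissonMeasure_iff.2 ?_
  simpa [mul_div_right_comm, mul_comm, mul_assoc, mul_left_comm]
    using (Real.summable_sq_mul_pow_div_factorial r).mul_left (Real.exp (-r))

theorem ProbabilityTheory.lintegral_sq_poissonMeasure_lt_top (r : ℝ≥0) :
    ∫⁻ n, (n : ℝ≥0∞) ^ 2 ∂poissonMeasure r < ⊤ := by
  simpa [ENNReal.ofReal_pow] using (integrable_sq_poissonMeasure r).lintegral_lt_top

theorem compound_poisson_moment_bound_general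
    {Ω : Type*} [MeasurableSpace Ω] (P : Measure Ω) [IsProbabilityMeasure P]
    (lam : NNReal)
    (N : Ω → ℕ) (hN : Measurable N) (hNlaw : P.map N = poissonMeasure lam)
    (X : ℕ → Ω → ℝ) (hXmeas : ∀ i, Measurable (X i))
    (hident : ∀ i, IdentDistrib (X i) (X 0) P P)
    (hNX : IndepFun N (fun ω i => X i ω) P)
    (p : ℝ) (hp : 0 < p) (hp2 : p ≤ 2)
    (hmom : ∫⁻ ω, ENNReal.ofReal (|X 0 ω| ^ p) ∂P < ⊤) :
    ∫⁻ ω, ENNReal.ofReal (|∑ i ∈ Finset.range (N ω), X i ω| ^ p) ∂P ≤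
        (∫⁻ ω, (N ω : ℝ≥0∞) ^ 2 ∂P) * ∫⁻ ω, ENNReal.ofReal (|X 0 ω| ^ p) ∂P ∧
    ∫⁻ ω, ENNReal.ofReal (|∑ i ∈ Finset.range (N ω), X i ω| ^ p) ∂P < ⊤ := by
  have hbound : ∫⁻ ω, ENNReal.ofReal (|∑ i ∈ range (N ω), X i ω| ^ p) ∂P ≤
      (∫⁻ ω, (N ω : ℝ≥0∞) ^ 2 ∂P) * ∫⁻ ω, ENNReal.ofReal (|X 0 ω| ^ p) ∂P :=
    calc _ ≤ ∫⁻ ω, N ω * ∑ i ∈ range (N ω), ENNReal.ofReal (|X i ω| ^ p) ∂P :=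
          lintegral_mono fun ω => by
            simpa using ENNReal.ofReal_abs_sum_rpow_le (range (N ω)) (X · ω) hp hp2
      _ = _ := lintegral_natCast_mul_sum_range_eq_of_indepFun hN hXmeas hNX hident
          (g := fun x => ENNReal.ofReal (|x| ^ p)) (by fun_prop)
  have hsq : ∫⁻ ω, (N ω : ℝ≥0∞) ^ 2 ∂P < ⊤ := by
    rw [← lintegral_map (f := fun n : ℕ => (n : ℝ≥0∞) ^ 2) measurable_from_nat hN, hNlaw]
    exact lintegral_sq_poissonMeasure_lt_top lam
  exact ⟨hbound, hbound.trans_lt (ENNReal.mul_lt_top hsq hmom)⟩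

theorem compound_poisson_moment_bound
    {Ω : Type*} [MeasurableSpace Ω] (P : Measure Ω) [IsProbabilityMeasure P]
    (lam : NNReal) (hlam : 0 < lam)
    (N : Ω → ℕ) (hN : Measurable N) (hNlaw : P.map N = poissonMeasure lam)
    (X : ℕ → Ω → ℝ) (hXmeas : ∀ i, Measurable (X i))
    (hindep : iIndepFun X P)
    (hident : ∀ i, IdentDistrib (X i) (X 0) P P)
    (hNX : IndepFun N (fun ω i => X i ω) P)
    (p : ℝ) (hp : 0 < p) (hp2 : p ≤ 2)
    (hmom : ∫⁻ ω, ENNReal.ofReal (|X 0 ω| ^ p) ∂P < ⊤) :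
    ∫⁻ ω, ENNReal.ofReal (|∑ i ∈ Finset.range (N ω), X i ω| ^ p) ∂P ≤
        (∫⁻ ω, (N ω : ℝ≥0∞) ^ 2 ∂P) * ∫⁻ ω, ENNReal.ofReal (|X 0 ω| ^ p) ∂P ∧
    ∫⁻ ω, ENNReal.ofReal (|∑ i ∈ Finset.range (N ω), X i ω| ^ p) ∂P < ⊤ :=
  compound_poisson_moment_bound_general P lam N hN hNlaw X hXmeas hident hNX p hp hp2 hmom
end
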